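/- Subdividing an edge of a graph G with at least one edge (replacing edge uv with edges uw and wv through a new vertex w) does not increase the carving-width of G, provided G has maximum degree at least 2. -/

import Mathlib

/-- Rooted binary carving trees over a vertex type `V`: unrooted binary tree
embeddings (with internal nodes of degree 3) of a graph on `V` are encoded by
rooting at the midpoint of an arbitrary tree edge. -/
inductive CarvTree (V : Type) where
  | leaf : V → CarvTree V
  | node : CarvTree V → CarvTree V → CarvTree V

namespace CarvTree

/-- The list of leaves of a carving tree. -/
def leafList {V : Type} : CarvTree V → List V
  | leaf v => [v]
  | node l r => leafList l ++ leafList r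

/-- The set of leaves of a carving tree. -/
def leafSet {V : Type} [DecidableEq V] : CarvTree V → Finset V
  | leaf v => {v}
  | node l r => leafSet l ∪ leafSet r

/-- The cuts of the embedding determined by a carving tree: one side of the
vertex bipartition induced by each tree edge. -/
def cuts {V : Type} [DecidableEq V] : CarvTree V → List (Finset V)
  | leaf v => [{v}]
  | node l r => (leafSet l ∪ leafSet r) :: (cuts l ++ cuts r)

end CarvTree

/-- The weight of a cut: the number of edges of `G` between `S` and its
complement. -/
def cutWeight {V : Type} [Fintype V] [DecidableEq V] (G : SimpleGraph V)
    [DecidableRel G.Adj] (S : Finset V) : ℕ :=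
  (Finset.univ.filter fun p : V × V => p.1 ∈ S ∧ p.2 ∉ S ∧ G.Adj p.1 p.2).card

/-- A carving tree is a valid tree embedding when its leaves are exactly the
vertices of the graph, each appearing once (a bijection between vertices and
leaves). -/
def IsCarving {V : Type} [Fintype V] [DecidableEq V] (t : CarvTree V) : Prop :=
  t.leafList.Nodup ∧ t.leafSet = Finset.univ

/-- The congestion of a tree embedding: the maximal weight of a tree edge. -/
def congestion {V : Type} [Fintype V] [DecidableEq V] (G : SimpleGraph V)
    [DecidableRel G.Adj] (t : CarvTree V) : ℕ :=
  (t.cuts.map (cutWeight G)).foldr max 0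

/-- The carving-width of a graph: the minimal congestion over all its
embeddings into binary trees. -/
noncomputable def carvingWidth {V : Type} [Fintype V] [DecidableEq V]
    (G : SimpleGraph V) [DecidableRel G.Adj] : ℕ :=
  sInf {k | ∃ t : CarvTree V, IsCarving t ∧ congestion G t ≤ k}

/-- Subdivision of the edge `uv` of `G`: the edge `uv` is replaced by the two
edges `u–w` and `w–v` through a new vertex `w` (encoded as `none`). -/
def subdivide {V : Type} (G : SimpleGraph V) (u v : V) : SimpleGraph (Option V) where
  Adj x y :=
    match x, y with
    | some a, some b => G.Adj a b ∧ ¬((a = u ∧ b = v) ∨ (a = v ∧ b = u))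
    | some a, none => a = u ∨ a = v
    | none, some b => b = u ∨ b = v
    | none, none => False
  symm := by
    constructor
    rintro (_ | a) (_ | b) h
    · exact h
    · exact h
    · exact h
    · exact ⟨h.1.symm, fun hc => h.2 (by tauto)⟩
  loopless := by
    constructor
    rintro (_ | a) h
    · exact h
    · exact G.loopless.irrefl a h.1

instance {V : Type} [DecidableEq V] (G : SimpleGraph V) [DecidableRel G.Adj]
    (u v : V) : DecidableRel (subdivide G u v).Adj := by
  rintro (_ | a) (_ | b) <;> dsimp [subdivide] <;> infer_instance


/-! Take an optimal carving tree of `G` and replace its leaf `u` by a cherry carrying `u` and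
the new vertex `w`. Every old cut `S` becomes the preimage of `S` under the contraction of `uw`,
which has the same weight: the edge `uv` crosses `S` exactly when one of `uw`, `wv` crosses the
preimage. The two new cuts are `{u}`, of weight `deg u`, and `{w}`, of weight `2 ≤ Δ(G)`; both
are bounded by the congestion, which is at least every degree because singletons are cuts. -/

open CarvTree

namespace CarvTree

variable {V : Type} [DecidableEq V]

lemma leafSet_eq_toFinset (t : CarvTree V) : t.leafSet = t.leafList.toFinset := by
  induction t with
  | leaf v => simp [leafSet, leafList]
  | node l r ihl ihr => simp [leafSet, leafList, ihl, ihr]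

lemma singleton_mem_cuts {t : CarvTree V} {w : V} (hw : w ∈ t.leafSet) :
    ({w} : Finset V) ∈ t.cuts := by
  induction t with
  | leaf v =>
    rw [leafSet, Finset.mem_singleton] at hw
    simp [cuts, hw]
  | node l r ihl ihr =>
    rw [leafSet, Finset.mem_union] at hw
    rw [cuts, List.mem_cons, List.mem_append]
    exact Or.inr (hw.imp ihl ihr)

omit [DecidableEq V] in
lemma exists_leafList_eq_cons (v : V) (l : List V) : ∃ t : CarvTree V, t.leafList = v :: l := by
  induction l generalizing v with
  | nil => exact ⟨leaf v, rfl⟩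
  | cons w l ih =>
    obtain ⟨t, ht⟩ := ih w
    exact ⟨node (leaf v) t, by rw [leafList, ht, leafList, List.singleton_append]⟩

def splitLeaf (u : V) : CarvTree V → CarvTree (Option V)
  | leaf w => if w = u then node (leaf (some u)) (leaf none) else leaf (some w)
  | node l r => node (splitLeaf u l) (splitLeaf u r)

lemma mem_leafList_splitLeaf {u : V} {t : CarvTree V} {x : Option V} :
    x ∈ (splitLeaf u t).leafList ↔ x.getD u ∈ t.leafList := by
  induction t with
  | leaf w =>
    by_cases h : w = u
    · subst h
      cases x <;> simp [splitLeaf, leafList]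
    · cases x <;> simp [splitLeaf, leafList, h, Ne.symm h]
  | node l r ihl ihr => simp [splitLeaf, leafList, ihl, ihr]

lemma mem_leafSet_splitLeaf {u : V} {t : CarvTree V} {x : Option V} :
    x ∈ (splitLeaf u t).leafSet ↔ x.getD u ∈ t.leafSet := by
  simp only [leafSet_eq_toFinset, List.mem_toFinset, mem_leafList_splitLeaf]

lemma nodup_leafList_splitLeaf (u : V) {t : CarvTree V} (ht : t.leafList.Nodup) :
    (splitLeaf u t).leafList.Nodup := by
  induction t with
  | leaf w =>
    by_cases h : w = u <;> simp [splitLeaf, leafList, h]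
  | node l r ihl ihr =>
    rw [leafList, List.nodup_append] at ht
    obtain ⟨hl, hr, hlr⟩ := ht
    rw [splitLeaf, leafList, List.nodup_append]
    refine ⟨ihl hl, ihr hr, fun x hx y hy hxy => ?_⟩
    subst hxy
    exact hlr _ (mem_leafList_splitLeaf.1 hx) _ (mem_leafList_splitLeaf.1 hy) rfl

lemma mem_cuts_splitLeaf {u : V} {t : CarvTree V} {T : Finset (Option V)}
    (hT : T ∈ (splitLeaf u t).cuts) :
    (∃ S ∈ t.cuts, ∀ x, x ∈ T ↔ x.getD u ∈ S) ∨ T = {some u} ∨ T = {none} := by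
  induction t with
  | leaf w =>
    by_cases h : w = u
    · subst h
      simp only [splitLeaf, if_pos, cuts, leafSet, List.mem_cons, List.mem_append,
        List.not_mem_nil, or_false] at hT
      rcases hT with rfl | rfl | rfl
      · exact .inl ⟨{w}, List.mem_singleton_self _, fun x => by cases x <;> simp⟩
      · exact .inr (.inl rfl)
      · exact .inr (.inr rfl)
    · simp only [splitLeaf, if_neg h, cuts, List.mem_singleton] at hT
      subst hT
      exact .inl ⟨{w}, List.mem_singleton_self _, fun x => by cases x <;> simp [Ne.symm h]⟩
  | node l r ihl ihr =>
    rw [splitLeaf, cuts, List.mem_cons, List.mem_append] at hT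
    rcases hT with rfl | hT | hT
    · refine .inl ⟨l.leafSet ∪ r.leafSet, List.mem_cons_self, fun x => ?_⟩
      simp only [Finset.mem_union, mem_leafSet_splitLeaf]
    · exact (ihl hT).imp_left fun ⟨S, hS, hST⟩ => ⟨S, by simp [cuts, hS], hST⟩
    · exact (ihr hT).imp_left fun ⟨S, hS, hST⟩ => ⟨S, by simp [cuts, hS], hST⟩

end CarvTree

section Congestion

variable {V : Type} [Fintype V] [DecidableEq V] {G : SimpleGraph V} [DecidableRel G.Adj]

lemma congestion_le_iff {t : CarvTree V} {k : ℕ} :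
    congestion G t ≤ k ↔ ∀ S ∈ t.cuts, cutWeight G S ≤ k := by
  refine ⟨fun h S hS => ?_, fun h => List.max_le_of_forall_le _ _ ?_⟩
  · exact le_trans (List.le_max_of_le (List.mem_map_of_mem hS) le_rfl) h
  · simpa using h

lemma cutWeight_le_congestion {t : CarvTree V} {S : Finset V} (hS : S ∈ t.cuts) :
    cutWeight G S ≤ congestion G t :=
  congestion_le_iff.1 le_rfl S hS

lemma cutWeight_singleton (w : V) : cutWeight G {w} = G.degree w := by
  rw [cutWeight, ← SimpleGraph.card_neighborFinset_eq_degree,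
    ← Finset.card_map ⟨Prod.mk w, Prod.mk_right_injective w⟩ (s := G.neighborFinset w)]
  refine congrArg Finset.card (Finset.ext fun ⟨a, b⟩ => ?_)
  simp only [Finset.mem_filter, Finset.mem_univ, true_and, Finset.mem_singleton,
    Finset.mem_map, Function.Embedding.coeFn_mk, SimpleGraph.mem_neighborFinset, Prod.mk.injEq]
  constructor
  · rintro ⟨rfl, -, hab⟩
    exact ⟨b, hab, rfl, rfl⟩
  · rintro ⟨b, hab, rfl, rfl⟩
    exact ⟨rfl, hab.ne', hab⟩

lemma degree_le_congestion {t : CarvTree V} {w : V} (hw : w ∈ t.leafSet) :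
    G.degree w ≤ congestion G t :=
  cutWeight_singleton (G := G) w ▸ cutWeight_le_congestion (singleton_mem_cuts hw)

lemma maxDegree_le_congestion {t : CarvTree V} (ht : IsCarving t) :
    G.maxDegree ≤ congestion G t :=
  G.maxDegree_le_of_forall_degree_le _ fun w => degree_le_congestion (ht.2 ▸ Finset.mem_univ w)

end Congestion

section CarvingWidth

variable {V : Type} [Fintype V] [DecidableEq V] (G : SimpleGraph V) [DecidableRel G.Adj]

lemma exists_isCarving [Nonempty V] : ∃ t : CarvTree V, IsCarving t := by
  obtain ⟨v, l, hvl⟩ := List.exists_cons_of_ne_nil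
    (Finset.univ_nonempty (α := V)).toList_ne_nil
  obtain ⟨t, ht⟩ := exists_leafList_eq_cons v l
  refine ⟨t, ?_, ?_⟩
  · rw [ht, ← hvl]
    exact Finset.nodup_toList _
  · rw [leafSet_eq_toFinset, ht, ← hvl, Finset.toList_toFinset]

lemma isCarving_splitLeaf {u : V} {t : CarvTree V} (ht : IsCarving t) :
    IsCarving (splitLeaf u t) :=
  ⟨nodup_leafList_splitLeaf u ht.1,
    Finset.eq_univ_of_forall fun _ => mem_leafSet_splitLeaf.2 (ht.2 ▸ Finset.mem_univ _)⟩

lemma carvingWidth_le_congestion {t : CarvTree V} (ht : IsCarving t) :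
    carvingWidth G ≤ congestion G t :=
  Nat.sInf_le ⟨t, ht, le_rfl⟩

lemma exists_congestion_eq_carvingWidth [Nonempty V] :
    ∃ t : CarvTree V, IsCarving t ∧ congestion G t = carvingWidth G := by
  obtain ⟨t, ht⟩ := exists_isCarving (V := V)
  obtain ⟨t', ht', hle⟩ :
      carvingWidth G ∈ {k | ∃ t : CarvTree V, IsCarving t ∧ congestion G t ≤ k} :=
    Nat.sInf_mem ⟨_, t, ht, le_rfl⟩
  exact ⟨t', ht', le_antisymm hle (carvingWidth_le_congestion G ht')⟩

end CarvingWidth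

section Subdivide

@[simp]
lemma subdivide_adj_some_some {V : Type} {G : SimpleGraph V} {u v a b : V} :
    (subdivide G u v).Adj (some a) (some b) ↔
      G.Adj a b ∧ ¬((a = u ∧ b = v) ∨ (a = v ∧ b = u)) :=
  Iff.rfl

@[simp]
lemma subdivide_adj_some_none {V : Type} {G : SimpleGraph V} {u v a : V} :
    (subdivide G u v).Adj (some a) none ↔ a = u ∨ a = v :=
  Iff.rfl

@[simp]
lemma subdivide_adj_none_some {V : Type} {G : SimpleGraph V} {u v b : V} :
    (subdivide G u v).Adj none (some b) ↔ b = u ∨ b = v :=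
  Iff.rfl

@[simp]
lemma subdivide_adj_none_none {V : Type} {G : SimpleGraph V} {u v : V} :
    ¬(subdivide G u v).Adj none none :=
  id

variable {V : Type} [Fintype V] [DecidableEq V] {G : SimpleGraph V} [DecidableRel G.Adj]
  {u v : V}

lemma degree_subdivide_some_left (huv : G.Adj u v) :
    (subdivide G u v).degree (some u) = G.degree u := by
  simp only [← SimpleGraph.card_neighborFinset_eq_degree]
  refine Finset.card_nbij' (fun x => x.getD v) (fun b => if b = v then none else some b)
    ?_ ?_ ?_ ?_
  · rintro (_ | b) hb <;> simp_all
  · intro b hb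
    by_cases hbv : b = v <;> simp_all [huv.ne]
  · rintro (_ | b) hb
    · simp
    · simp_all
  · intro b _
    by_cases hbv : b = v <;> simp [hbv]

lemma degree_subdivide_none (huv : u ≠ v) : (subdivide G u v).degree none = 2 := by
  rw [← SimpleGraph.card_neighborFinset_eq_degree,
    show (subdivide G u v).neighborFinset none = {some u, some v} by
      ext (_ | b) <;> simp [SimpleGraph.mem_neighborFinset]]
  simp [huv]

/-- A crossing pair of the subdivision is sent to its image under the contraction of `uw`
(`w = none`); the inverse sends `(u, v)` to `(w, v)` and `(v, u)` to `(v, w)`. -/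
lemma cutWeight_subdivide_of_mem_iff (huv : G.Adj u v) {S : Finset V} {T : Finset (Option V)}
    (hT : ∀ x, x ∈ T ↔ x.getD u ∈ S) : cutWeight (subdivide G u v) T = cutWeight G S := by
  refine Finset.card_nbij' (fun p => (p.1.getD u, p.2.getD u))
    (fun q => if q = (u, v) then (none, some v) else if q = (v, u) then (some v, none)
      else (some q.1, some q.2)) ?_ ?_ ?_ ?_
  all_goals simp only [Set.MapsTo, Set.LeftInvOn, Set.RightInvOn, Finset.coe_filter,
    Set.mem_ofPred_eq, Finset.mem_univ, true_and, hT, Prod.forall, Prod.mk.injEq]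
  · have hvu := huv.symm
    rintro (_ | a) (_ | b) <;> aesop
  · intro a b hab
    split_ifs <;> aesop
  · rintro (_ | a) (_ | b) ⟨hx, hy, hadj⟩
    · exact absurd hadj subdivide_adj_none_none
    · obtain rfl | rfl := hadj
      · exact absurd hx hy
      · simp
    · obtain rfl | rfl := hadj
      · exact absurd hx hy
      · simp [huv.ne']
    · rw [subdivide_adj_some_some, not_or] at hadj
      simp [hadj.2.1, hadj.2.2]
  · intro a b hab
    split_ifs <;> aesop

lemma congestion_subdivide_splitLeaf_le (huv : G.Adj u v) {t : CarvTree V} (hu : u ∈ t.leafSet) :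
    congestion (subdivide G u v) (splitLeaf u t) ≤ max 2 (congestion G t) := by
  refine congestion_le_iff.2 fun T hT => ?_
  rcases mem_cuts_splitLeaf hT with ⟨S, hS, hST⟩ | rfl | rfl
  · rw [cutWeight_subdivide_of_mem_iff huv hST]
    exact le_max_of_le_right (cutWeight_le_congestion hS)
  · rw [cutWeight_singleton, degree_subdivide_some_left huv]
    exact le_max_of_le_right (degree_le_congestion hu)
  · rw [cutWeight_singleton, degree_subdivide_none huv.ne]
    exact le_max_left _ _

end Subdivide

/-- Subdividing an edge of a graph `G` with at least one edge does not increase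
the carving-width of `G`, provided `G` has maximum degree at least `2`. -/
theorem carvingWidth_subdivide_le {V : Type} [Fintype V] [DecidableEq V]
    (G : SimpleGraph V) [DecidableRel G.Adj] (u v : V) (huv : G.Adj u v)
    (hdeg : 2 ≤ G.maxDegree) :
    carvingWidth (subdivide G u v) ≤ carvingWidth G := by
  have : Nonempty V := ⟨u⟩
  obtain ⟨t, ht, hwidth⟩ := exists_congestion_eq_carvingWidth G
  have hu : u ∈ t.leafSet := ht.2 ▸ Finset.mem_univ u
  calc carvingWidth (subdivide G u v)
      ≤ congestion (subdivide G u v) (splitLeaf u t) :=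
        carvingWidth_le_congestion _ (isCarving_splitLeaf ht)
    _ ≤ max 2 (congestion G t) := congestion_subdivide_splitLeaf_le huv hu
    _ = carvingWidth G := by rw [max_eq_right (hdeg.trans (maxDegree_le_congestion ht)), hwidth]
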